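/- Let H̃ : ℝ³₊ → ℝ³ be a smooth, rapidly decaying vector field with ∇×H̃ = 0 and div H̃ = 0 on the half-space. Then ∫_{ℝ²} H̃_1 H̃_2 |_{x_1=0} dx' = 0 and ∫_{ℝ²} H̃_1 H̃_3 |_{x_1=0} dx' = 0. -/

import Mathlib

open MeasureTheory

/-- Divergence of a vector field on ℝ³. -/
noncomputable def vdiv (F : (Fin 3 → ℝ) → (Fin 3 → ℝ)) (x : Fin 3 → ℝ) : ℝ :=
  ∑ i, fderiv ℝ F x (Pi.single i 1) i

/-- Curl of a vector field on ℝ³. -/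
noncomputable def vcurl (F : (Fin 3 → ℝ) → (Fin 3 → ℝ)) (x : Fin 3 → ℝ) : Fin 3 → ℝ :=
  ![fderiv ℝ F x (Pi.single 1 1) 2 - fderiv ℝ F x (Pi.single 2 1) 1,
    fderiv ℝ F x (Pi.single 2 1) 0 - fderiv ℝ F x (Pi.single 0 1) 2,
    fderiv ℝ F x (Pi.single 0 1) 1 - fderiv ℝ F x (Pi.single 1 1) 0]

open MeasureTheory Filter

/-- derivative along a line in direction `Pi.single j 1`. -/
lemma line_hasDerivAt (f : (Fin 3 → ℝ) → ℝ) (hf : Differentiable ℝ f)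
    (c : Fin 3 → ℝ) (v : Fin 3 → ℝ) (s : ℝ) :
    HasDerivAt (fun a => f (c + a • v)) (fderiv ℝ f (c + s • v) v) s := by
  have hline : HasDerivAt (fun a : ℝ => c + a • v) v s := by
    simpa using ((hasDerivAt_id s).smul_const v).const_add c
  exact ((hf (c + s • v)).hasFDerivAt).comp_hasDerivAt s hline

/-- integral over ℝ of a derivative of a function tending to 0 at both ends is 0. -/
lemma integral_deriv_zero {ψ ψ' : ℝ → ℝ} (hd : ∀ s, HasDerivAt ψ (ψ' s) s)
    (hint : Integrable ψ')
    (htop : Tendsto ψ atTop (nhds 0)) (hbot : Tendsto ψ atBot (nhds 0)) :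
    ∫ s, ψ' s = 0 := by
  have hn : Tendsto (fun n : ℕ => -(n : ℝ)) atTop atBot :=
    tendsto_neg_atTop_atBot.comp tendsto_natCast_atTop_atTop
  have hp : Tendsto (fun n : ℕ => (n : ℝ)) atTop atTop := tendsto_natCast_atTop_atTop
  have h1 : Tendsto (fun n : ℕ => ∫ x in (-(n:ℝ))..(n:ℝ), ψ' x) atTop (nhds (∫ x, ψ' x)) :=
    intervalIntegral_tendsto_integral hint hn hp
  have h2 : ∀ n : ℕ, (∫ x in (-(n:ℝ))..(n:ℝ), ψ' x) = ψ n - ψ (-(n:ℝ)) := fun n =>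
    intervalIntegral.integral_eq_sub_of_hasDerivAt (fun x _ => hd x)
      (hint.intervalIntegrable)
  have h3 : Tendsto (fun n : ℕ => ψ (n : ℝ) - ψ (-(n:ℝ))) atTop (nhds (0 - 0)) :=
    (htop.comp hp).sub (hbot.comp hn)
  rw [show (0:ℝ) - 0 = 0 by ring] at h3
  exact tendsto_nhds_unique (h1.congr h2) h3

lemma pi_norm_ge {n : ℕ} (x : Fin n → ℝ) (i : Fin n) : |x i| ≤ ‖x‖ := by
  simpa using norm_le_pi_norm x i

lemma cons_norm_ge_tail (t : ℝ) (x' : Fin 2 → ℝ) : ‖x'‖ ≤ ‖(Fin.cons t x' : Fin 3 → ℝ)‖ := by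
  rw [pi_norm_le_iff_of_nonneg (norm_nonneg _)]
  intro i
  simpa using pi_norm_ge (Fin.cons t x') i.succ

lemma one_add_mul_le_sq (t s : ℝ) (ht : 0 ≤ t) (hs : 0 ≤ s) (M : ℝ) (hM : t ≤ M) (hM' : s ≤ M) :
    (1 + t) * (1 + s) ≤ (1 + M) ^ 2 := by nlinarith


section chunk2
variable (φ : (Fin 3 → ℝ) → ℝ)

/-- Integral over a line of the directional derivative of a decaying function is zero. -/
lemma line_case (hdφ : Differentiable ℝ φ)
    (hcont : Continuous (fderiv ℝ φ)) (C : ℝ)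
    (hC : ∀ x, (|φ x| + ‖fderiv ℝ φ x‖) * (1 + ‖x‖) ^ 4 ≤ C)
    (c v : Fin 3 → ℝ) (hv : ‖v‖ ≤ 1)
    (hnorm : ∀ a : ℝ, |a| ≤ ‖c + a • v‖) :
    ∫ a : ℝ, fderiv ℝ φ (c + a • v) v = 0 := by
  set ψ : ℝ → ℝ := fun a => φ (c + a • v) with hψ
  set ψ' : ℝ → ℝ := fun a => fderiv ℝ φ (c + a • v) v with hψ'
  have hbase : ∀ a : ℝ, (|φ (c + a • v)| + ‖fderiv ℝ φ (c + a • v)‖) * (1 + |a|) ^ 2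
      ≤ C := by
    intro a
    set x := c + a • v
    have h1 : (1:ℝ) + |a| ≤ 1 + ‖x‖ := by linarith [hnorm a]
    have h2 : ((1:ℝ) + |a|) ^ 2 ≤ (1 + ‖x‖) ^ 2 := by
      apply pow_le_pow_left₀ (by positivity) h1
    have h3 : ((1:ℝ) + ‖x‖) ^ 2 ≤ (1 + ‖x‖) ^ 4 := by
      apply pow_le_pow_right₀ (by linarith [norm_nonneg x]) (by norm_num)
    have h4 := hC x
    have h5 : 0 ≤ |φ x| + ‖fderiv ℝ φ x‖ := by positivity
    nlinarith
  have hC0 : 0 ≤ C := le_trans (by positivity) (hbase 0)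
  -- derivative bound
  have hb' : ∀ a : ℝ, |ψ' a| ≤ C * (1 + |a|) ^ (-(2:ℝ)) := by
    intro a
    have h0 : |ψ' a| ≤ ‖fderiv ℝ φ (c + a • v)‖ := by
      calc |ψ' a| ≤ ‖fderiv ℝ φ (c + a • v)‖ * ‖v‖ :=
            (fderiv ℝ φ (c + a • v)).le_opNorm v
        _ ≤ ‖fderiv ℝ φ (c + a • v)‖ * 1 := by
            exact mul_le_mul_of_nonneg_left hv (norm_nonneg _)
        _ = _ := mul_one _
    have h1 := hbase a
    have h2 : (0:ℝ) < (1 + |a|) ^ 2 := by positivity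
    have h3 : ‖fderiv ℝ φ (c + a • v)‖ * (1 + |a|) ^ 2 ≤ C := by
      have := abs_nonneg (φ (c + a • v))
      nlinarith
    have h4 : |ψ' a| ≤ C / (1 + |a|) ^ 2 := by
      rw [le_div_iff₀ h2]
      exact le_trans (mul_le_mul_of_nonneg_right h0 (le_of_lt h2)) h3
    have h5 : C * (1 + |a|) ^ (-(2:ℝ)) = C / (1 + |a|) ^ 2 := by
      rw [Real.rpow_neg (by positivity), ← Real.rpow_natCast (1 + |a|) 2]
      norm_num
      ring
    rw [h5]; exact h4
  -- value bound
  have hvb : ∀ a : ℝ, |ψ a| ≤ C * (1 + |a|)⁻¹ := by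
    intro a
    have h1 := hbase a
    have h2 : (0:ℝ) < 1 + |a| := by positivity
    have h3 : |ψ a| * (1 + |a|) ≤ C := by
      have h6 : (1+|a|) ≤ (1+|a|)^2 := by nlinarith [abs_nonneg a]
      have := norm_nonneg (fderiv ℝ φ (c + a • v))
      have h7 : |ψ a| * (1+|a|)^2 ≤ C := by nlinarith [abs_nonneg (ψ a)]
      nlinarith [abs_nonneg (ψ a)]
    have h4 : |ψ a| ≤ C / (1 + |a|) := (le_div_iff₀ h2).mpr h3
    simpa [div_eq_mul_inv] using h4
  -- differentiability
  have hline : ∀ s : ℝ, HasDerivAt ψ (ψ' s) s := by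
    intro s
    have hl : HasDerivAt (fun a : ℝ => c + a • v) v s := by
      simpa using ((hasDerivAt_id s).smul_const v).const_add c
    exact ((hdφ (c + s • v)).hasFDerivAt).comp_hasDerivAt s hl
  -- continuity of ψ'
  have hcψ' : Continuous ψ' := by
    have h1 : Continuous (fun a : ℝ => c + a • v) := by continuity
    exact (ContinuousLinearMap.apply ℝ ℝ v).continuous.comp (hcont.comp h1)
  -- integrability of ψ'
  have hint : Integrable ψ' := by
    have hi : Integrable (fun a : ℝ => C * (1 + ‖a‖) ^ (-(2:ℝ))) :=
      (integrable_one_add_norm (by simp)).const_mul C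
    refine hi.mono' hcψ'.aestronglyMeasurable (Filter.Eventually.of_forall fun a => ?_)
    simpa [Real.norm_eq_abs] using hb' a
  -- limits
  have hT : Tendsto (fun a : ℝ => C * (1 + |a|)⁻¹) atTop (nhds 0) := by
    have h1 : Tendsto (fun a : ℝ => 1 + |a|) atTop atTop :=
      Filter.tendsto_atTop_add_const_left _ 1 Filter.tendsto_abs_atTop_atTop
    simpa using (h1.inv_tendsto_atTop).const_mul C
  have hB : Tendsto (fun a : ℝ => C * (1 + |a|)⁻¹) atBot (nhds 0) := by
    have h1 : Tendsto (fun a : ℝ => 1 + |a|) atBot atTop :=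
      Filter.tendsto_atTop_add_const_left _ 1 Filter.tendsto_abs_atBot_atTop
    simpa using (h1.inv_tendsto_atTop).const_mul C
  have htop : Tendsto ψ atTop (nhds 0) := squeeze_zero_norm hvb hT
  have hbot : Tendsto ψ atBot (nhds 0) := squeeze_zero_norm hvb hB
  exact integral_deriv_zero hline hint htop hbot
end chunk2

lemma cons_eq_vec (t : ℝ) (x' : Fin 2 → ℝ) : (Fin.cons t x' : Fin 3 → ℝ) = ![t, x' 0, x' 1] := by
  funext i; fin_cases i <;> rfl

lemma finrank_fin2 : (Module.finrank ℝ (Fin 2 → ℝ) : ℝ) < 3 := by simp; norm_num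

section chunk3
variable (φ : (Fin 3 → ℝ) → ℝ)

lemma vec_cont (t : ℝ) : Continuous (fun p : ℝ × ℝ => (![t, p.1, p.2] : Fin 3 → ℝ)) := by
  apply continuous_pi
  intro i
  fin_cases i
  · simpa using continuous_const
  · simpa using continuous_fst
  · simpa using continuous_snd

lemma prod_norm_le (t : ℝ) (p : ℝ × ℝ) : ‖p‖ ≤ ‖(![t, p.1, p.2] : Fin 3 → ℝ)‖ := by
  have h1 : |p.1| ≤ ‖(![t, p.1, p.2] : Fin 3 → ℝ)‖ := by
    simpa using norm_le_pi_norm ![t, p.1, p.2] 1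
  have h2 : |p.2| ≤ ‖(![t, p.1, p.2] : Fin 3 → ℝ)‖ := by
    simpa using norm_le_pi_norm ![t, p.1, p.2] 2
  rw [Prod.norm_def]
  simp only [Real.norm_eq_abs]
  exact max_le h1 h2

lemma plane_integrable (hcont : Continuous (fderiv ℝ φ)) (C : ℝ)
    (hC : ∀ x, (|φ x| + ‖fderiv ℝ φ x‖) * (1 + ‖x‖) ^ 4 ≤ C)
    (t : ℝ) (v : Fin 3 → ℝ) (hv : ‖v‖ ≤ 1) :
    Integrable (fun p : ℝ × ℝ => fderiv ℝ φ (![t, p.1, p.2]) v) := by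
  have hC0 : 0 ≤ C := le_trans (by positivity) (hC 0)
  have hcg : Continuous (fun p : ℝ × ℝ => fderiv ℝ φ (![t, p.1, p.2]) v) :=
    (ContinuousLinearMap.apply ℝ ℝ v).continuous.comp (hcont.comp (vec_cont t))
  have hi : Integrable (fun p : ℝ × ℝ => C * (1 + ‖p‖) ^ (-(3:ℝ))) :=
    (integrable_one_add_norm (by simp; norm_num)).const_mul C
  refine hi.mono' hcg.aestronglyMeasurable (Filter.Eventually.of_forall fun p => ?_)
  set x : Fin 3 → ℝ := ![t, p.1, p.2]
  have h0 : ‖fderiv ℝ φ x v‖ ≤ ‖fderiv ℝ φ x‖ := by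
    calc ‖fderiv ℝ φ x v‖ ≤ ‖fderiv ℝ φ x‖ * ‖v‖ := (fderiv ℝ φ x).le_opNorm v
      _ ≤ ‖fderiv ℝ φ x‖ * 1 := mul_le_mul_of_nonneg_left hv (norm_nonneg _)
      _ = _ := mul_one _
  have h1 : (1:ℝ) + ‖p‖ ≤ 1 + ‖x‖ := by linarith [prod_norm_le t p]
  have h2 : ((1:ℝ) + ‖p‖) ^ 3 ≤ (1 + ‖x‖) ^ 4 := by
    calc ((1:ℝ) + ‖p‖) ^ 3 ≤ (1 + ‖x‖) ^ 3 :=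
          pow_le_pow_left₀ (by positivity) h1 3
      _ ≤ (1 + ‖x‖) ^ 4 := pow_le_pow_right₀ (by linarith [norm_nonneg x]) (by norm_num)
  have h3 : ‖fderiv ℝ φ x‖ * (1 + ‖x‖) ^ 4 ≤ C := by
    nlinarith [hC x, abs_nonneg (φ x), pow_nonneg (by positivity : (0:ℝ) ≤ 1 + ‖x‖) 4]
  have h4 : ‖fderiv ℝ φ x v‖ * (1 + ‖p‖) ^ 3 ≤ C := by
    have h5 : ‖fderiv ℝ φ x v‖ * (1 + ‖p‖) ^ 3 ≤ ‖fderiv ℝ φ x‖ * (1 + ‖x‖) ^ 4 := by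
      apply mul_le_mul h0 h2 (by positivity) (norm_nonneg _)
    linarith
  have h6 : (0:ℝ) < (1 + ‖p‖) ^ 3 := by positivity
  have h7 : C * (1 + ‖p‖) ^ (-(3:ℝ)) = C / (1 + ‖p‖) ^ 3 := by
    rw [Real.rpow_neg (by positivity), ← Real.rpow_natCast (1 + ‖p‖) 3]
    norm_num; ring
  rw [h7, le_div_iff₀ h6]
  exact h4

lemma plane_sum (hdφ : Differentiable ℝ φ) (hcont : Continuous (fderiv ℝ φ)) (C : ℝ)
    (hC : ∀ x, (|φ x| + ‖fderiv ℝ φ x‖) * (1 + ‖x‖) ^ 4 ≤ C)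
    (t : ℝ) (j : Fin 3) (hj : j = 1 ∨ j = 2) :
    ∫ p : ℝ × ℝ, fderiv ℝ φ (![t, p.1, p.2]) (Pi.single j 1) = 0 := by
  have hv : ‖(Pi.single j 1 : Fin 3 → ℝ)‖ ≤ 1 := by rw [Pi.norm_single]; simp
  have hInt := plane_integrable φ hcont C hC t (Pi.single j 1) hv
  rw [MeasureTheory.Measure.volume_eq_prod] at hInt ⊢
  rcases hj with hj | hj
  · subst hj
    rw [MeasureTheory.integral_prod_symm _ hInt]
    have inner : ∀ b : ℝ, (∫ a : ℝ, fderiv ℝ φ (![t, a, b]) (Pi.single 1 1)) = 0 := by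
      intro b
      have key : ∀ a : ℝ, (![t,0,b] : Fin 3 → ℝ) + a • (Pi.single 1 1 : Fin 3 → ℝ) = ![t,a,b] := by
        intro a; funext i; fin_cases i <;> simp
      have hnorm : ∀ a : ℝ, |a| ≤ ‖(![t,0,b] : Fin 3 → ℝ) + a • (Pi.single 1 1 : Fin 3 → ℝ)‖ := by
        intro a; rw [key a]; simpa using norm_le_pi_norm ![t,a,b] 1
      have := line_case φ hdφ hcont C hC ![t,0,b] (Pi.single 1 1) hv hnorm
      rw [← this]
      congr 1; funext a; rw [key a]
    simp only [inner, integral_zero]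
  · subst hj
    rw [MeasureTheory.integral_prod _ hInt]
    have inner : ∀ a : ℝ, (∫ b : ℝ, fderiv ℝ φ (![t, a, b]) (Pi.single 2 1)) = 0 := by
      intro a
      have key : ∀ b : ℝ, (![t,a,0] : Fin 3 → ℝ) + b • (Pi.single 2 1 : Fin 3 → ℝ) = ![t,a,b] := by
        intro b; funext i; fin_cases i <;> simp
      have hnorm : ∀ b : ℝ, |b| ≤ ‖(![t,a,0] : Fin 3 → ℝ) + b • (Pi.single 2 1 : Fin 3 → ℝ)‖ := by
        intro b; rw [key b]; simpa using norm_le_pi_norm ![t,a,b] 2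
      have := line_case φ hdφ hcont C hC ![t,a,0] (Pi.single 2 1) hv hnorm
      rw [← this]
      congr 1; funext b; rw [key b]
    simp only [inner, integral_zero]

lemma finTwoArrow_comp (f : ℝ × ℝ → ℝ) (x' : Fin 2 → ℝ) :
    f (MeasurableEquiv.finTwoArrow x') = f (x' 0, x' 1) := by
  congr 1

lemma plane_integral_zero (hdφ : Differentiable ℝ φ) (hcont : Continuous (fderiv ℝ φ)) (C : ℝ)
    (hC : ∀ x, (|φ x| + ‖fderiv ℝ φ x‖) * (1 + ‖x‖) ^ 4 ≤ C)
    (t : ℝ) (j : Fin 3) (hj : j = 1 ∨ j = 2) :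
    ∫ x' : Fin 2 → ℝ, fderiv ℝ φ (Fin.cons t x') (Pi.single j 1) = 0 := by
  have key := (volume_preserving_finTwoArrow ℝ).integral_comp
    (MeasurableEquiv.finTwoArrow (α := ℝ)).measurableEmbedding
    (fun p : ℝ × ℝ => fderiv ℝ φ (![t, p.1, p.2]) (Pi.single j 1))
  have h2 : (∫ x' : Fin 2 → ℝ, fderiv ℝ φ (Fin.cons t x') (Pi.single j 1))
      = ∫ x' : Fin 2 → ℝ, fderiv ℝ φ (![t, x' 0, x' 1]) (Pi.single j 1) := by
    congr 1; funext x'; rw [cons_eq_vec]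
  rw [h2, show (fun x' : Fin 2 → ℝ => fderiv ℝ φ (![t, x' 0, x' 1]) (Pi.single j 1))
      = (fun x' : Fin 2 → ℝ => (fun p : ℝ × ℝ => fderiv ℝ φ (![t, p.1, p.2]) (Pi.single j 1))
        (MeasurableEquiv.finTwoArrow x')) from by funext x'; simp [MeasurableEquiv.finTwoArrow]]
  rw [key]
  exact plane_sum φ hdφ hcont C hC t j hj

lemma plane_integrable_fin (hcont : Continuous (fderiv ℝ φ)) (C : ℝ)
    (hC : ∀ x, (|φ x| + ‖fderiv ℝ φ x‖) * (1 + ‖x‖) ^ 4 ≤ C)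
    (t : ℝ) (v : Fin 3 → ℝ) (hv : ‖v‖ ≤ 1) :
    Integrable (fun x' : Fin 2 → ℝ => fderiv ℝ φ (Fin.cons t x') v) := by
  have h := plane_integrable φ hcont C hC t v hv
  have h2 := ((volume_preserving_finTwoArrow ℝ).integrable_comp_emb
    (MeasurableEquiv.finTwoArrow (α := ℝ)).measurableEmbedding).mpr h
  refine h2.congr ?_
  apply Filter.Eventually.of_forall
  intro x'
  show (fun p : ℝ × ℝ => fderiv ℝ φ (![t, p.1, p.2]) v) (MeasurableEquiv.finTwoArrow x') = _
  simp [MeasurableEquiv.finTwoArrow, cons_eq_vec]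
end chunk3

section chunk4
variable (Ht : (Fin 3 → ℝ) → (Fin 3 → ℝ))

/-- consolidated decay -/
lemma decay' (hdecay : ∀ k : ℕ, ∃ C : ℝ, ∀ x : Fin 3 → ℝ,
      ‖x‖ ^ k * (‖Ht x‖ + ‖fderiv ℝ Ht x‖) ≤ C) (k : ℕ) :
    ∃ C : ℝ, 0 ≤ C ∧ ∀ x, (‖Ht x‖ + ‖fderiv ℝ Ht x‖) * (1 + ‖x‖) ^ k ≤ C := by
  obtain ⟨C0, h0⟩ := hdecay 0
  obtain ⟨Ck, hk⟩ := hdecay k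
  have hC0pos : 0 ≤ C0 := le_trans (by positivity) (h0 0)
  have hCkpos : 0 ≤ Ck := le_trans (by positivity) (hk 0)
  refine ⟨2 ^ k * (C0 + Ck), by positivity, fun x => ?_⟩
  set a := ‖Ht x‖ + ‖fderiv ℝ Ht x‖ with ha
  have ha0 : 0 ≤ a := by positivity
  have hN0 : (0:ℝ) ≤ ‖x‖ := norm_nonneg x
  have h0' : a ≤ C0 := by have := h0 x; simpa using this
  have hk' : ‖x‖ ^ k * a ≤ Ck := hk x
  have hP : (1 + ‖x‖) ^ k ≤ 2 ^ k * (1 + ‖x‖ ^ k) := by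
    rcases le_total ‖x‖ 1 with h | h
    · have h1 : (1 + ‖x‖) ^ k ≤ 2 ^ k := pow_le_pow_left₀ (by positivity) (by linarith) k
      have h2 : (2:ℝ) ^ k ≤ 2 ^ k * (1 + ‖x‖ ^ k) := by
        nlinarith [pow_nonneg hN0 k, pow_pos (show (0:ℝ) < 2 by norm_num) k]
      linarith
    · have h1 : (1 + ‖x‖) ^ k ≤ (2 * ‖x‖) ^ k :=
        pow_le_pow_left₀ (by positivity) (by linarith) k
      have h2 : (2 * ‖x‖) ^ k = 2 ^ k * ‖x‖ ^ k := mul_pow 2 ‖x‖ k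
      have h3 : (2:ℝ) ^ k * ‖x‖ ^ k ≤ 2 ^ k * (1 + ‖x‖ ^ k) := by
        have : (0:ℝ) < 2 ^ k := pow_pos (by norm_num) k
        nlinarith
      linarith
  calc a * (1 + ‖x‖) ^ k ≤ a * (2 ^ k * (1 + ‖x‖ ^ k)) :=
        mul_le_mul_of_nonneg_left hP ha0
    _ = 2 ^ k * (a + ‖x‖ ^ k * a) := by ring
    _ ≤ 2 ^ k * (C0 + Ck) := by
        have : a + ‖x‖ ^ k * a ≤ C0 + Ck := by linarith
        have h2 : (0:ℝ) ≤ 2 ^ k := by positivity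
        exact mul_le_mul_of_nonneg_left this h2

lemma comp_proj_hasFDerivAt (hs : ContDiff ℝ (⊤ : ℕ∞) Ht) (i : Fin 3) (x : Fin 3 → ℝ) :
    HasFDerivAt (fun y => Ht y i)
      ((ContinuousLinearMap.proj i).comp (fderiv ℝ Ht x)) x := by
  exact (ContinuousLinearMap.proj i).hasFDerivAt.comp x (hs.differentiable (by simp) x).hasFDerivAt

lemma prod_hasFDerivAt (hs : ContDiff ℝ (⊤ : ℕ∞) Ht) (i j : Fin 3) (x : Fin 3 → ℝ) :
    HasFDerivAt (fun y => Ht y i * Ht y j)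
      (Ht x i • ((ContinuousLinearMap.proj j).comp (fderiv ℝ Ht x))
        + Ht x j • ((ContinuousLinearMap.proj i).comp (fderiv ℝ Ht x))) x :=
  (comp_proj_hasFDerivAt Ht hs i x).mul (comp_proj_hasFDerivAt Ht hs j x)

lemma prod_fderiv_apply (hs : ContDiff ℝ (⊤ : ℕ∞) Ht) (i j : Fin 3) (x v : Fin 3 → ℝ) :
    fderiv ℝ (fun y => Ht y i * Ht y j) x v
      = Ht x i * fderiv ℝ Ht x v j + Ht x j * fderiv ℝ Ht x v i := by
  rw [(prod_hasFDerivAt Ht hs i j x).fderiv]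
  simp [ContinuousLinearMap.add_apply, ContinuousLinearMap.smul_apply,
    ContinuousLinearMap.comp_apply, ContinuousLinearMap.proj_apply, smul_eq_mul]

lemma prod_contDiff (hs : ContDiff ℝ (⊤ : ℕ∞) Ht) (i j : Fin 3) : ContDiff ℝ (⊤ : ℕ∞) (fun y => Ht y i * Ht y j) := by
  have h1 : ContDiff ℝ (⊤ : ℕ∞) (fun y => Ht y i) := by
    exact (ContinuousLinearMap.proj (R := ℝ) (φ := fun _ : Fin 3 => ℝ) i).contDiff.comp hs
  have h2 : ContDiff ℝ (⊤ : ℕ∞) (fun y => Ht y j) := by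
    exact (ContinuousLinearMap.proj (R := ℝ) (φ := fun _ : Fin 3 => ℝ) j).contDiff.comp hs
  exact h1.mul h2

lemma prod_abs_le (i j : Fin 3) (x : Fin 3 → ℝ) :
    |Ht x i * Ht x j| ≤ ‖Ht x‖ * ‖Ht x‖ := by
  rw [abs_mul]
  have h1 : |Ht x i| ≤ ‖Ht x‖ := by simpa using norm_le_pi_norm (Ht x) i
  have h2 : |Ht x j| ≤ ‖Ht x‖ := by simpa using norm_le_pi_norm (Ht x) j
  exact mul_le_mul h1 h2 (abs_nonneg _) (norm_nonneg _)

lemma prod_pair_le (i j : Fin 3) (x v : Fin 3 → ℝ) :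
    |Ht x i * fderiv ℝ Ht x v j + Ht x j * fderiv ℝ Ht x v i|
      ≤ 2 * ‖Ht x‖ * (‖fderiv ℝ Ht x‖ * ‖v‖) := by
  have hDv : ∀ m : Fin 3, |fderiv ℝ Ht x v m| ≤ ‖fderiv ℝ Ht x‖ * ‖v‖ := fun m => by
    calc |fderiv ℝ Ht x v m| ≤ ‖fderiv ℝ Ht x v‖ := by
          simpa using norm_le_pi_norm (fderiv ℝ Ht x v) m
      _ ≤ ‖fderiv ℝ Ht x‖ * ‖v‖ := (fderiv ℝ Ht x).le_opNorm v
  have hh : ∀ m : Fin 3, |Ht x m| ≤ ‖Ht x‖ := fun m => by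
    simpa using norm_le_pi_norm (Ht x) m
  calc |Ht x i * fderiv ℝ Ht x v j + Ht x j * fderiv ℝ Ht x v i|
      ≤ |Ht x i * fderiv ℝ Ht x v j| + |Ht x j * fderiv ℝ Ht x v i| := abs_add_le _ _
    _ ≤ ‖Ht x‖ * (‖fderiv ℝ Ht x‖ * ‖v‖) + ‖Ht x‖ * (‖fderiv ℝ Ht x‖ * ‖v‖) := by
        rw [abs_mul, abs_mul]
        have e1 := mul_le_mul (hh i) (hDv j) (abs_nonneg _) (norm_nonneg _)
        have e2 := mul_le_mul (hh j) (hDv i) (abs_nonneg _) (norm_nonneg _)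
        exact add_le_add e1 e2
    _ = 2 * ‖Ht x‖ * (‖fderiv ℝ Ht x‖ * ‖v‖) := by ring

end chunk4

section chunk5
variable (Ht : (Fin 3 → ℝ) → (Fin 3 → ℝ))

/-- a linear combination of three quadratic expressions in the components of `Ht`. -/
def mix (c1 c2 c3 : ℝ) (i1 i2 i3 i4 i5 i6 : Fin 3) : (Fin 3 → ℝ) → ℝ :=
  fun y => c1 * (Ht y i1 * Ht y i2) + c2 * (Ht y i3 * Ht y i4) + c3 * (Ht y i5 * Ht y i6)

lemma mix_hasFDerivAt (hs : ContDiff ℝ (⊤ : ℕ∞) Ht) (c1 c2 c3 : ℝ) (i1 i2 i3 i4 i5 i6 : Fin 3)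
    (x : Fin 3 → ℝ) :
    HasFDerivAt (mix Ht c1 c2 c3 i1 i2 i3 i4 i5 i6)
      ((c1 • (Ht x i1 • ((ContinuousLinearMap.proj i2).comp (fderiv ℝ Ht x))
          + Ht x i2 • ((ContinuousLinearMap.proj i1).comp (fderiv ℝ Ht x)))
        + c2 • (Ht x i3 • ((ContinuousLinearMap.proj i4).comp (fderiv ℝ Ht x))
          + Ht x i4 • ((ContinuousLinearMap.proj i3).comp (fderiv ℝ Ht x))))
        + c3 • (Ht x i5 • ((ContinuousLinearMap.proj i6).comp (fderiv ℝ Ht x))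
          + Ht x i6 • ((ContinuousLinearMap.proj i5).comp (fderiv ℝ Ht x)))) x := by
  exact (((prod_hasFDerivAt Ht hs i1 i2 x).const_mul c1).add
    ((prod_hasFDerivAt Ht hs i3 i4 x).const_mul c2)).add
    ((prod_hasFDerivAt Ht hs i5 i6 x).const_mul c3)

lemma mix_differentiable (hs : ContDiff ℝ (⊤ : ℕ∞) Ht) (c1 c2 c3 : ℝ) (i1 i2 i3 i4 i5 i6 : Fin 3) :
    Differentiable ℝ (mix Ht c1 c2 c3 i1 i2 i3 i4 i5 i6) :=
  fun x => (mix_hasFDerivAt Ht hs c1 c2 c3 i1 i2 i3 i4 i5 i6 x).differentiableAt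

lemma mix_contDiff (hs : ContDiff ℝ (⊤ : ℕ∞) Ht) (c1 c2 c3 : ℝ) (i1 i2 i3 i4 i5 i6 : Fin 3) :
    ContDiff ℝ (⊤ : ℕ∞) (mix Ht c1 c2 c3 i1 i2 i3 i4 i5 i6) :=
  ((contDiff_const.mul (prod_contDiff Ht hs i1 i2)).add
    (contDiff_const.mul (prod_contDiff Ht hs i3 i4))).add
    (contDiff_const.mul (prod_contDiff Ht hs i5 i6))

lemma mix_fderiv_apply (hs : ContDiff ℝ (⊤ : ℕ∞) Ht) (c1 c2 c3 : ℝ) (i1 i2 i3 i4 i5 i6 : Fin 3)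
    (x v : Fin 3 → ℝ) :
    fderiv ℝ (mix Ht c1 c2 c3 i1 i2 i3 i4 i5 i6) x v
      = c1 * (Ht x i1 * fderiv ℝ Ht x v i2 + Ht x i2 * fderiv ℝ Ht x v i1)
        + c2 * (Ht x i3 * fderiv ℝ Ht x v i4 + Ht x i4 * fderiv ℝ Ht x v i3)
        + c3 * (Ht x i5 * fderiv ℝ Ht x v i6 + Ht x i6 * fderiv ℝ Ht x v i5) := by
  rw [(mix_hasFDerivAt Ht hs c1 c2 c3 i1 i2 i3 i4 i5 i6 x).fderiv]
  simp [ContinuousLinearMap.add_apply, ContinuousLinearMap.smul_apply,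
    ContinuousLinearMap.comp_apply, ContinuousLinearMap.proj_apply, smul_eq_mul]
  ring

lemma mix_opnorm_le (hs : ContDiff ℝ (⊤ : ℕ∞) Ht) (c1 c2 c3 : ℝ) (i1 i2 i3 i4 i5 i6 : Fin 3)
    (x : Fin 3 → ℝ) :
    ‖fderiv ℝ (mix Ht c1 c2 c3 i1 i2 i3 i4 i5 i6) x‖
      ≤ (|c1| + |c2| + |c3|) * (2 * ‖Ht x‖ * ‖fderiv ℝ Ht x‖) := by
  apply ContinuousLinearMap.opNorm_le_bound _ (by positivity)
  intro v
  rw [Real.norm_eq_abs, mix_fderiv_apply Ht hs]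
  have k1 := prod_pair_le Ht i1 i2 x v
  have k2 := prod_pair_le Ht i3 i4 x v
  have k3 := prod_pair_le Ht i5 i6 x v
  calc |c1 * (Ht x i1 * fderiv ℝ Ht x v i2 + Ht x i2 * fderiv ℝ Ht x v i1)
        + c2 * (Ht x i3 * fderiv ℝ Ht x v i4 + Ht x i4 * fderiv ℝ Ht x v i3)
        + c3 * (Ht x i5 * fderiv ℝ Ht x v i6 + Ht x i6 * fderiv ℝ Ht x v i5)|
      ≤ |c1| * |Ht x i1 * fderiv ℝ Ht x v i2 + Ht x i2 * fderiv ℝ Ht x v i1|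
        + |c2| * |Ht x i3 * fderiv ℝ Ht x v i4 + Ht x i4 * fderiv ℝ Ht x v i3|
        + |c3| * |Ht x i5 * fderiv ℝ Ht x v i6 + Ht x i6 * fderiv ℝ Ht x v i5| := by
        calc _ ≤ |c1 * (Ht x i1 * fderiv ℝ Ht x v i2 + Ht x i2 * fderiv ℝ Ht x v i1)
              + c2 * (Ht x i3 * fderiv ℝ Ht x v i4 + Ht x i4 * fderiv ℝ Ht x v i3)|
              + |c3 * (Ht x i5 * fderiv ℝ Ht x v i6 + Ht x i6 * fderiv ℝ Ht x v i5)| :=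
              abs_add_le _ _
          _ ≤ _ := by
              linarith [abs_add_le (c1 * (Ht x i1 * fderiv ℝ Ht x v i2 + Ht x i2 * fderiv ℝ Ht x v i1))
                (c2 * (Ht x i3 * fderiv ℝ Ht x v i4 + Ht x i4 * fderiv ℝ Ht x v i3)),
                abs_mul c1 (Ht x i1 * fderiv ℝ Ht x v i2 + Ht x i2 * fderiv ℝ Ht x v i1),
                abs_mul c2 (Ht x i3 * fderiv ℝ Ht x v i4 + Ht x i4 * fderiv ℝ Ht x v i3),
                abs_mul c3 (Ht x i5 * fderiv ℝ Ht x v i6 + Ht x i6 * fderiv ℝ Ht x v i5)]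
    _ ≤ |c1| * (2 * ‖Ht x‖ * (‖fderiv ℝ Ht x‖ * ‖v‖))
        + |c2| * (2 * ‖Ht x‖ * (‖fderiv ℝ Ht x‖ * ‖v‖))
        + |c3| * (2 * ‖Ht x‖ * (‖fderiv ℝ Ht x‖ * ‖v‖)) := by
        have e1 := mul_le_mul_of_nonneg_left k1 (abs_nonneg c1)
        have e2 := mul_le_mul_of_nonneg_left k2 (abs_nonneg c2)
        have e3 := mul_le_mul_of_nonneg_left k3 (abs_nonneg c3)
        linarith
    _ = (|c1| + |c2| + |c3|) * (2 * ‖Ht x‖ * ‖fderiv ℝ Ht x‖) * ‖v‖ := by ring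

lemma mix_abs_le (c1 c2 c3 : ℝ) (i1 i2 i3 i4 i5 i6 : Fin 3) (x : Fin 3 → ℝ) :
    |mix Ht c1 c2 c3 i1 i2 i3 i4 i5 i6 x| ≤ (|c1| + |c2| + |c3|) * (‖Ht x‖ * ‖Ht x‖) := by
  have k1 := prod_abs_le Ht i1 i2 x
  have k2 := prod_abs_le Ht i3 i4 x
  have k3 := prod_abs_le Ht i5 i6 x
  have e1 := mul_le_mul_of_nonneg_left k1 (abs_nonneg c1)
  have e2 := mul_le_mul_of_nonneg_left k2 (abs_nonneg c2)
  have e3 := mul_le_mul_of_nonneg_left k3 (abs_nonneg c3)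
  calc |mix Ht c1 c2 c3 i1 i2 i3 i4 i5 i6 x|
      ≤ |c1 * (Ht x i1 * Ht x i2) + c2 * (Ht x i3 * Ht x i4)| + |c3 * (Ht x i5 * Ht x i6)| :=
        abs_add_le _ _
    _ ≤ |c1| * |Ht x i1 * Ht x i2| + |c2| * |Ht x i3 * Ht x i4| + |c3| * |Ht x i5 * Ht x i6| := by
        linarith [abs_add_le (c1 * (Ht x i1 * Ht x i2)) (c2 * (Ht x i3 * Ht x i4)),
          abs_mul c1 (Ht x i1 * Ht x i2), abs_mul c2 (Ht x i3 * Ht x i4),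
          abs_mul c3 (Ht x i5 * Ht x i6)]
    _ ≤ _ := by linarith

lemma bound_arith (m f a b Q C A : ℝ) (ha0 : 0 ≤ a) (hb0 : 0 ≤ b) (hQ0 : 0 ≤ Q)
    (hA0 : 0 ≤ A) (h1 : m ≤ A * (a * a)) (h2 : f ≤ A * (2 * a * b))
    (h3 : (a + b) * Q ≤ C) : (m + f) * Q ^ 2 ≤ 3 * A * C ^ 2 := by
  have s1 : m + f ≤ 3 * A * (a + b) ^ 2 := by
    nlinarith [mul_nonneg (mul_nonneg hA0 ha0) ha0, mul_nonneg (mul_nonneg hA0 ha0) hb0,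
      mul_nonneg (mul_nonneg hA0 hb0) hb0]
  have s2 : (m + f) * Q ^ 2 ≤ 3 * A * (a + b) ^ 2 * Q ^ 2 :=
    mul_le_mul_of_nonneg_right s1 (by positivity)
  have s3 : 3 * A * (a + b) ^ 2 * Q ^ 2 = 3 * A * ((a + b) * Q) ^ 2 := by ring
  have s4 : ((a + b) * Q) ^ 2 ≤ C ^ 2 := by
    nlinarith [mul_nonneg (add_nonneg ha0 hb0) hQ0]
  nlinarith [mul_le_mul_of_nonneg_left s4 (by positivity : (0:ℝ) ≤ 3 * A)]

lemma mix_bound (hs : ContDiff ℝ (⊤ : ℕ∞) Ht) (c1 c2 c3 : ℝ) (i1 i2 i3 i4 i5 i6 : Fin 3)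
    (C2 : ℝ) (hC2 : ∀ x, (‖Ht x‖ + ‖fderiv ℝ Ht x‖) * (1 + ‖x‖) ^ 2 ≤ C2) (x : Fin 3 → ℝ) :
    (|mix Ht c1 c2 c3 i1 i2 i3 i4 i5 i6 x|
      + ‖fderiv ℝ (mix Ht c1 c2 c3 i1 i2 i3 i4 i5 i6) x‖) * (1 + ‖x‖) ^ 4
      ≤ 3 * (|c1| + |c2| + |c3|) * C2 ^ 2 := by
  have h4 : ((1:ℝ) + ‖x‖) ^ 4 = ((1 + ‖x‖) ^ 2) ^ 2 := by ring
  rw [h4]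
  apply bound_arith _ _ (‖Ht x‖) (‖fderiv ℝ Ht x‖) _ _ _ (norm_nonneg _) (norm_nonneg _)
    (by positivity) (by positivity)
  · exact mix_abs_le Ht c1 c2 c3 i1 i2 i3 i4 i5 i6 x
  · have := mix_opnorm_le Ht hs c1 c2 c3 i1 i2 i3 i4 i5 i6 x
    calc ‖fderiv ℝ (mix Ht c1 c2 c3 i1 i2 i3 i4 i5 i6) x‖
        ≤ (|c1| + |c2| + |c3|) * (2 * ‖Ht x‖ * ‖fderiv ℝ Ht x‖) := this
      _ = (|c1| + |c2| + |c3|) * (2 * ‖Ht x‖ * ‖fderiv ℝ Ht x‖) := rfl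
  · exact hC2 x

lemma prod01_bound (hs : ContDiff ℝ (⊤ : ℕ∞) Ht) (i j : Fin 3)
    (C2 : ℝ) (hC2 : ∀ x, (‖Ht x‖ + ‖fderiv ℝ Ht x‖) * (1 + ‖x‖) ^ 2 ≤ C2) (x : Fin 3 → ℝ) :
    (|Ht x i * Ht x j| + ‖fderiv ℝ (fun y => Ht y i * Ht y j) x‖) * (1 + ‖x‖) ^ 4
      ≤ 3 * C2 ^ 2 := by
  have h4 : ((1:ℝ) + ‖x‖) ^ 4 = ((1 + ‖x‖) ^ 2) ^ 2 := by ring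
  rw [h4, show (3:ℝ) * C2 ^ 2 = 3 * 1 * C2 ^ 2 by ring]
  apply bound_arith _ _ (‖Ht x‖) (‖fderiv ℝ Ht x‖) _ _ _ (norm_nonneg _) (norm_nonneg _)
    (by positivity) (by norm_num)
  · have := prod_abs_le Ht i j x; linarith
  · have h2 : ‖fderiv ℝ (fun y => Ht y i * Ht y j) x‖ ≤ 2 * ‖Ht x‖ * ‖fderiv ℝ Ht x‖ := by
      apply ContinuousLinearMap.opNorm_le_bound _ (by positivity)
      intro v
      rw [Real.norm_eq_abs, prod_fderiv_apply Ht hs]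
      calc |Ht x i * fderiv ℝ Ht x v j + Ht x j * fderiv ℝ Ht x v i|
          ≤ 2 * ‖Ht x‖ * (‖fderiv ℝ Ht x‖ * ‖v‖) := prod_pair_le Ht i j x v
        _ = 2 * ‖Ht x‖ * ‖fderiv ℝ Ht x‖ * ‖v‖ := by ring
    linarith
  · exact hC2 x
end chunk5


section chunk6
variable (Ht : (Fin 3 → ℝ) → (Fin 3 → ℝ))

lemma curl_rel (hc : vcurl Ht x = 0) :
    fderiv ℝ Ht x (Pi.single 1 1) 2 = fderiv ℝ Ht x (Pi.single 2 1) 1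
    ∧ fderiv ℝ Ht x (Pi.single 2 1) 0 = fderiv ℝ Ht x (Pi.single 0 1) 2
    ∧ fderiv ℝ Ht x (Pi.single 0 1) 1 = fderiv ℝ Ht x (Pi.single 1 1) 0 := by
  refine ⟨?_, ?_, ?_⟩
  · have := congrFun hc 0; simp [vcurl] at this; linarith
  · have := congrFun hc 1; simp [vcurl] at this; linarith
  · have := congrFun hc 2; simp [vcurl] at this; linarith

lemma div_rel (hd : vdiv Ht x = 0) :
    fderiv ℝ Ht x (Pi.single 0 1) 0 + fderiv ℝ Ht x (Pi.single 1 1) 1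
      + fderiv ℝ Ht x (Pi.single 2 1) 2 = 0 := by
  have := hd; simp only [vdiv, Fin.sum_univ_three] at this; linarith

lemma ident1 (hs : ContDiff ℝ (⊤ : ℕ∞) Ht) (x : Fin 3 → ℝ)
    (hc : vcurl Ht x = 0) (hd : vdiv Ht x = 0) :
    2 * fderiv ℝ (fun y => Ht y 0 * Ht y 1) x (Pi.single 0 1)
      = fderiv ℝ (mix Ht 1 (-1) 1 0 0 1 1 2 2) x (Pi.single 1 1)
        + fderiv ℝ (mix Ht (-2) 0 0 1 2 0 0 0 0) x (Pi.single 2 1) := by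
  obtain ⟨c0, c1, c2⟩ := curl_rel Ht hc
  have d := div_rel Ht hd
  rw [prod_fderiv_apply Ht hs, mix_fderiv_apply Ht hs, mix_fderiv_apply Ht hs]
  linear_combination (2 * Ht x 0) * c2 + (2 * Ht x 1) * d - (2 * Ht x 2) * c0

lemma ident2 (hs : ContDiff ℝ (⊤ : ℕ∞) Ht) (x : Fin 3 → ℝ)
    (hc : vcurl Ht x = 0) (hd : vdiv Ht x = 0) :
    2 * fderiv ℝ (fun y => Ht y 0 * Ht y 2) x (Pi.single 0 1)
      = fderiv ℝ (mix Ht 1 1 (-1) 0 0 1 1 2 2) x (Pi.single 2 1)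
        + fderiv ℝ (mix Ht (-2) 0 0 1 2 0 0 0 0) x (Pi.single 1 1) := by
  obtain ⟨c0, c1, c2⟩ := curl_rel Ht hc
  have d := div_rel Ht hd
  rw [prod_fderiv_apply Ht hs, mix_fderiv_apply Ht hs, mix_fderiv_apply Ht hs]
  linear_combination (-(2 * Ht x 0)) * c1 + (2 * Ht x 2) * d + (2 * Ht x 1) * c0
end chunk6

lemma cons_cont (t : ℝ) : Continuous (fun x' : Fin 2 → ℝ => (Fin.cons t x' : Fin 3 → ℝ)) := by
  apply continuous_pi
  intro i
  refine Fin.cases ?_ ?_ i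
  · simpa using continuous_const
  · intro m; simpa using continuous_apply m

lemma decay_split (S N t n' C : ℝ) (hS : 0 ≤ S) (ht : 0 ≤ t) (hn' : 0 ≤ n')
    (h1 : t ≤ N) (h2 : n' ≤ N) (h : S * (1 + N) ^ 4 ≤ C) :
    S * (1 + t) ≤ C * (1 + n') ^ (-(3:ℝ)) := by
  have hN : (0:ℝ) ≤ N := le_trans hn' h2
  have e1 : ((1:ℝ) + n') ^ 3 ≤ (1 + N) ^ 3 := pow_le_pow_left₀ (by positivity) (by linarith) 3
  have key : (1 + t) * ((1:ℝ) + n') ^ 3 ≤ (1 + N) ^ 4 := by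
    calc (1 + t) * ((1:ℝ) + n') ^ 3 ≤ (1 + N) * (1 + N) ^ 3 :=
          mul_le_mul (by linarith) e1 (by positivity) (by positivity)
      _ = (1 + N) ^ 4 := by ring
  have h5 : S * (1 + t) * ((1:ℝ) + n') ^ 3 ≤ C := by
    calc S * (1 + t) * ((1:ℝ) + n') ^ 3 = S * ((1 + t) * (1 + n') ^ 3) := by ring
      _ ≤ S * ((1 + N) ^ 4) := mul_le_mul_of_nonneg_left key hS
      _ ≤ C := h
  have h6 : (0:ℝ) < (1 + n') ^ 3 := by positivity
  have h7 : C * ((1:ℝ) + n') ^ (-(3:ℝ)) = C / (1 + n') ^ 3 := by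
    rw [Real.rpow_neg (by positivity), ← Real.rpow_natCast (1 + n') 3]
    norm_num; ring
  rw [h7, le_div_iff₀ h6]
  exact h5

lemma conserved (Ht : (Fin 3 → ℝ) → (Fin 3 → ℝ)) (hs : ContDiff ℝ (⊤ : ℕ∞) Ht)
    (hdecay : ∀ k : ℕ, ∃ C : ℝ, ∀ x : Fin 3 → ℝ, ‖x‖ ^ k * (‖Ht x‖ + ‖fderiv ℝ Ht x‖) ≤ C)
    (i0 : Fin 3) (φF φG : (Fin 3 → ℝ) → ℝ)
    (hdF : Differentiable ℝ φF) (hcF : Continuous (fderiv ℝ φF))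
    (hdG : Differentiable ℝ φG) (hcG : Continuous (fderiv ℝ φG))
    (CF : ℝ) (hCF : ∀ x, (|φF x| + ‖fderiv ℝ φF x‖) * (1 + ‖x‖) ^ 4 ≤ CF)
    (CG : ℝ) (hCG : ∀ x, (|φG x| + ‖fderiv ℝ φG x‖) * (1 + ‖x‖) ^ 4 ≤ CG)
    (jF jG : Fin 3) (hjF : jF = 1 ∨ jF = 2) (hjG : jG = 1 ∨ jG = 2)
    (hid : ∀ x : Fin 3 → ℝ, 0 < x 0 →
      2 * fderiv ℝ (fun y => Ht y 0 * Ht y i0) x (Pi.single 0 1)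
        = fderiv ℝ φF x (Pi.single jF 1) + fderiv ℝ φG x (Pi.single jG 1)) :
    ∫ x' : Fin 2 → ℝ, Ht (Fin.cons 0 x') 0 * Ht (Fin.cons 0 x') i0 = 0 := by
  obtain ⟨C2, hC2_0, hC2⟩ := decay' Ht hdecay 2
  set P : (Fin 3 → ℝ) → ℝ := fun y => Ht y 0 * Ht y i0 with hP
  have hPd : Differentiable ℝ P := fun x => (prod_hasFDerivAt Ht hs 0 i0 x).differentiableAt
  have hPcd : ContDiff ℝ (⊤ : ℕ∞) P := prod_contDiff Ht hs 0 i0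
  have hPc : Continuous (fderiv ℝ P) := hPcd.continuous_fderiv (by simp)
  have hPB : ∀ y, (|P y| + ‖fderiv ℝ P y‖) * (1 + ‖y‖) ^ 4 ≤ 3 * C2 ^ 2 :=
    prod01_bound Ht hs 0 i0 C2 hC2
  set b3 : (Fin 2 → ℝ) → ℝ := fun x' => (3 * C2 ^ 2) * (1 + ‖x'‖) ^ (-(3:ℝ)) with hb3
  have hb3int : Integrable b3 := (integrable_one_add_norm finrank_fin2).const_mul _
  have hboth : ∀ (t : ℝ) (x' : Fin 2 → ℝ),
      |P (Fin.cons t x')| + ‖fderiv ℝ P (Fin.cons t x')‖ ≤ b3 x' := by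
    intro t x'
    have h := decay_split (|P (Fin.cons t x')| + ‖fderiv ℝ P (Fin.cons t x')‖)
      ‖(Fin.cons t x' : Fin 3 → ℝ)‖ 0 ‖x'‖ (3 * C2 ^ 2) (by positivity) le_rfl
      (norm_nonneg _) (norm_nonneg _) (cons_norm_ge_tail t x') (hPB _)
    rw [hb3]; dsimp only; rw [Real.rpow_neg (by positivity), ← Real.rpow_natCast] at *; simpa using h
  set F : ℝ → (Fin 2 → ℝ) → ℝ := fun t x' => P (Fin.cons t x') with hF
  set F' : ℝ → (Fin 2 → ℝ) → ℝ := fun t x' => fderiv ℝ P (Fin.cons t x') (Pi.single 0 1)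
    with hF'
  set I : ℝ → ℝ := fun t => ∫ x', F t x' with hI
  have hFmeas : ∀ t : ℝ, AEStronglyMeasurable (F t) volume := fun t =>
    (hPcd.continuous.comp (cons_cont t)).aestronglyMeasurable
  have hF'cont : ∀ t : ℝ, Continuous (F' t) := fun t =>
    (ContinuousLinearMap.apply ℝ ℝ (Pi.single 0 1)).continuous.comp (hPc.comp (cons_cont t))
  have hFbound : ∀ (t : ℝ) x', ‖F t x'‖ ≤ b3 x' := by
    intro t x'
    have := hboth t x'
    have h2 : ‖F t x'‖ = |P (Fin.cons t x')| := rfl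
    rw [h2]
    linarith [norm_nonneg (fderiv ℝ P (Fin.cons t x'))]
  have hF'bound : ∀ (t : ℝ) x', ‖F' t x'‖ ≤ b3 x' := by
    intro t x'
    have h0 : ‖F' t x'‖ ≤ ‖fderiv ℝ P (Fin.cons t x')‖ := by
      calc ‖F' t x'‖ ≤ ‖fderiv ℝ P (Fin.cons t x')‖ * ‖(Pi.single 0 1 : Fin 3 → ℝ)‖ :=
            (fderiv ℝ P (Fin.cons t x')).le_opNorm _
        _ = ‖fderiv ℝ P (Fin.cons t x')‖ := by rw [Pi.norm_single]; simp
    have := hboth t x'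
    linarith [abs_nonneg (P (Fin.cons t x'))]
  have hFint : ∀ t : ℝ, Integrable (F t) := fun t =>
    hb3int.mono' (hFmeas t) (Filter.Eventually.of_forall (hFbound t))
  have hderiv : ∀ (x' : Fin 2 → ℝ) (s : ℝ), HasDerivAt (fun t => F t x') (F' s x') s := by
    intro x' s
    have key0 : ∀ a : ℝ, (Fin.cons (0:ℝ) x' : Fin 3 → ℝ) + a • (Pi.single 0 1 : Fin 3 → ℝ)
        = Fin.cons a x' := by
      intro a; funext i
      refine Fin.cases ?_ ?_ i
      · simp
      · intro m; simp [Pi.single_eq_of_ne (Fin.succ_ne_zero m)]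
    have h := line_hasDerivAt P hPd (Fin.cons 0 x') (Pi.single 0 1) s
    rw [key0 s] at h
    refine h.congr_of_eventuallyEq ?_
    refine Filter.Eventually.of_forall fun a => ?_
    show P (Fin.cons a x') = P ((Fin.cons 0 x' : Fin 3 → ℝ) + a • (Pi.single 0 1 : Fin 3 → ℝ))
    rw [key0 a]
  have hI' : ∀ t : ℝ, HasDerivAt I (∫ x', F' t x') t := by
    intro t
    have h := hasDerivAt_integral_of_dominated_loc_of_deriv_le (F := F) (F' := F')
      (x₀ := t) (bound := b3) Filter.univ_mem
      (Filter.Eventually.of_forall fun s => hFmeas s) (hFint t)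
      ((hF'cont t).aestronglyMeasurable)
      (Filter.Eventually.of_forall fun x' s _ => hF'bound s x') hb3int
      (Filter.Eventually.of_forall fun x' s _ => hderiv x' s)
    exact h.2
  have hv1 : ‖(Pi.single jF 1 : Fin 3 → ℝ)‖ ≤ 1 := by rw [Pi.norm_single]; simp
  have hv2 : ‖(Pi.single jG 1 : Fin 3 → ℝ)‖ ≤ 1 := by rw [Pi.norm_single]; simp
  have hJ0 : ∀ t : ℝ, 0 < t → (∫ x', F' t x') = 0 := by
    intro t ht
    have hIF : Integrable (fun x' : Fin 2 → ℝ => fderiv ℝ φF (Fin.cons t x') (Pi.single jF 1)) :=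
      plane_integrable_fin φF hcF CF hCF t _ hv1
    have hIG : Integrable (fun x' : Fin 2 → ℝ => fderiv ℝ φG (Fin.cons t x') (Pi.single jG 1)) :=
      plane_integrable_fin φG hcG CG hCG t _ hv2
    have h2 : ∀ x' : Fin 2 → ℝ, 2 * F' t x'
        = fderiv ℝ φF (Fin.cons t x') (Pi.single jF 1)
          + fderiv ℝ φG (Fin.cons t x') (Pi.single jG 1) := by
      intro x'
      exact hid (Fin.cons t x') (by simpa using ht)
    have h3 : (2:ℝ) * ∫ x', F' t x' = 0 := by
      calc (2:ℝ) * ∫ x', F' t x' = ∫ x', 2 * F' t x' := (MeasureTheory.integral_const_mul 2 _).symm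
        _ = ∫ x', (fderiv ℝ φF (Fin.cons t x') (Pi.single jF 1)
              + fderiv ℝ φG (Fin.cons t x') (Pi.single jG 1)) := by
            exact integral_congr_ae (Filter.Eventually.of_forall h2)
        _ = (∫ x' : Fin 2 → ℝ, fderiv ℝ φF (Fin.cons t x') (Pi.single jF 1))
              + ∫ x' : Fin 2 → ℝ, fderiv ℝ φG (Fin.cons t x') (Pi.single jG 1) :=
            integral_add hIF hIG
        _ = 0 := by
            rw [plane_integral_zero φF hdF hcF CF hCF t jF hjF,
              plane_integral_zero φG hdG hcG CG hCG t jG hjG]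
            ring
    linarith
  have hIconst : ∀ a : ℝ, 0 < a → I a = I 1 := by
    intro a ha
    have hmin : (0:ℝ) < min a 1 := lt_min ha one_pos
    have hder0 : ∀ t ∈ Set.uIcc a 1, HasDerivAt I ((fun _ => (0:ℝ)) t) t := by
      intro t htt
      have hpos : 0 < t := lt_of_lt_of_le hmin htt.1
      have h := hI' t
      rw [hJ0 t hpos] at h
      exact h
    have h := intervalIntegral.integral_eq_sub_of_hasDerivAt hder0
      (intervalIntegrable_const)
    simp at h
    linarith
  have hI01 : I 0 = I 1 := by
    have hseq : Filter.Tendsto (fun n : ℕ => 1 / ((n:ℝ) + 1)) Filter.atTop (nhds 0) :=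
      tendsto_one_div_add_atTop_nhds_zero_nat
    have h1 : Filter.Tendsto (fun n : ℕ => I (1 / ((n:ℝ) + 1))) Filter.atTop (nhds (I 0)) :=
      ((hI' 0).continuousAt.tendsto).comp hseq
    have h2 : (fun n : ℕ => I (1 / ((n:ℝ) + 1))) = fun _ => I 1 :=
      funext fun n => hIconst _ (by positivity)
    rw [h2] at h1
    exact tendsto_nhds_unique h1 tendsto_const_nhds
  set K := ∫ x' : Fin 2 → ℝ, ((1:ℝ) + ‖x'‖) ^ (-(3:ℝ)) with hK
  have hKint : Integrable (fun x' : Fin 2 → ℝ => ((1:ℝ) + ‖x'‖) ^ (-(3:ℝ))) :=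
    integrable_one_add_norm finrank_fin2
  have hIb : ∀ t : ℝ, 0 ≤ t → |I t| ≤ (3 * C2 ^ 2) / (1 + t) * K := by
    intro t ht
    have ht1 : (0:ℝ) < 1 + t := by linarith
    have hb : ∀ x' : Fin 2 → ℝ, ‖F t x'‖
        ≤ (3 * C2 ^ 2) / (1 + t) * ((1:ℝ) + ‖x'‖) ^ (-(3:ℝ)) := by
      intro x'
      have htle : t ≤ ‖(Fin.cons t x' : Fin 3 → ℝ)‖ := by
        have := pi_norm_ge (Fin.cons t x' : Fin 3 → ℝ) 0
        simp only [Fin.cons_zero] at this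
        linarith [le_abs_self t]
      have h := decay_split (|P (Fin.cons t x')| + ‖fderiv ℝ P (Fin.cons t x')‖)
        ‖(Fin.cons t x' : Fin 3 → ℝ)‖ t ‖x'‖ (3 * C2 ^ 2) (by positivity) ht
        (norm_nonneg _) htle (cons_norm_ge_tail t x') (hPB _)
      have h2 : ‖F t x'‖ * (1 + t) ≤ (3 * C2 ^ 2) * ((1:ℝ) + ‖x'‖) ^ (-(3:ℝ)) := by
        have h3 : ‖F t x'‖ ≤ |P (Fin.cons t x')| + ‖fderiv ℝ P (Fin.cons t x')‖ := by
          have : ‖F t x'‖ = |P (Fin.cons t x')| := rfl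
          rw [this]; linarith [norm_nonneg (fderiv ℝ P (Fin.cons t x'))]
        calc ‖F t x'‖ * (1 + t)
            ≤ (|P (Fin.cons t x')| + ‖fderiv ℝ P (Fin.cons t x')‖) * (1 + t) :=
              mul_le_mul_of_nonneg_right h3 (le_of_lt ht1)
          _ ≤ _ := h
      rw [div_mul_eq_mul_div, le_div_iff₀ ht1]
      linarith
    have hnn := norm_integral_le_of_norm_le (hKint.const_mul ((3 * C2 ^ 2) / (1 + t)))
      (Filter.Eventually.of_forall hb)
    rw [MeasureTheory.integral_const_mul] at hnn
    calc |I t| = ‖∫ x' : Fin 2 → ℝ, F t x'‖ := (Real.norm_eq_abs _).symm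
      _ ≤ (3 * C2 ^ 2) / (1 + t) * K := hnn
  have hItail : Filter.Tendsto (fun n : ℕ => I (n : ℝ)) Filter.atTop (nhds 0) := by
    apply squeeze_zero_norm (fun n : ℕ => hIb (n : ℝ) (by positivity))
    have h1 : Filter.Tendsto (fun n : ℕ => ((1:ℝ) + (n:ℝ))) Filter.atTop Filter.atTop :=
      Filter.tendsto_atTop_add_const_left _ 1 tendsto_natCast_atTop_atTop
    have h2 := ((h1.inv_tendsto_atTop).const_mul (3 * C2 ^ 2)).mul_const K
    simp only [mul_zero, zero_mul] at h2
    refine h2.congr fun n => ?_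
    simp [Pi.inv_apply, div_eq_mul_inv]
  have hI1 : I 1 = 0 := by
    have h1 : Filter.Tendsto (fun n : ℕ => I (n : ℝ)) Filter.atTop (nhds (I 1)) := by
      apply Filter.Tendsto.congr' _ tendsto_const_nhds
      filter_upwards [Filter.eventually_ge_atTop 1] with n hn
      have : (0:ℝ) < (n : ℝ) := by exact_mod_cast Nat.lt_of_lt_of_le Nat.zero_lt_one hn
      exact (hIconst (n : ℝ) this).symm
    exact tendsto_nhds_unique h1 hItail
  calc ∫ x' : Fin 2 → ℝ, Ht (Fin.cons 0 x') 0 * Ht (Fin.cons 0 x') i0 = I 0 := rfl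
    _ = I 1 := hI01
    _ = 0 := hI1

/-- For a smooth, rapidly decaying, curl-free and divergence-free field `H̃` on the
half-space, the boundary integrals of `H̃₁H̃₂` and `H̃₁H̃₃` vanish. -/
theorem stmt10 (Ht : (Fin 3 → ℝ) → (Fin 3 → ℝ)) (hs : ContDiff ℝ (⊤ : ℕ∞) Ht)
    (hcurl : ∀ x : Fin 3 → ℝ, 0 < x 0 → vcurl Ht x = 0)
    (hdiv : ∀ x : Fin 3 → ℝ, 0 < x 0 → vdiv Ht x = 0)
    (hdecay : ∀ k : ℕ, ∃ C : ℝ, ∀ x : Fin 3 → ℝ,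
      ‖x‖ ^ k * (‖Ht x‖ + ‖fderiv ℝ Ht x‖) ≤ C)
    (hint2 : Integrable fun x' : Fin 2 → ℝ =>
      Ht (Fin.cons 0 x') 0 * Ht (Fin.cons 0 x') 1)
    (hint3 : Integrable fun x' : Fin 2 → ℝ =>
      Ht (Fin.cons 0 x') 0 * Ht (Fin.cons 0 x') 2) :
    (∫ x' : Fin 2 → ℝ, Ht (Fin.cons 0 x') 0 * Ht (Fin.cons 0 x') 1) = 0 ∧
    (∫ x' : Fin 2 → ℝ, Ht (Fin.cons 0 x') 0 * Ht (Fin.cons 0 x') 2) = 0 := by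
  obtain ⟨C2, hC2_0, hC2⟩ := decay' Ht hdecay 2
  have hB : ∀ x, (|mix Ht (-2) 0 0 1 2 0 0 0 0 x| + ‖fderiv ℝ (mix Ht (-2) 0 0 1 2 0 0 0 0) x‖)
      * (1 + ‖x‖) ^ 4 ≤ 3 * (|(-2:ℝ)| + |(0:ℝ)| + |(0:ℝ)|) * C2 ^ 2 :=
    mix_bound Ht hs (-2) 0 0 1 2 0 0 0 0 C2 hC2
  constructor
  · apply conserved Ht hs hdecay 1 (mix Ht 1 (-1) 1 0 0 1 1 2 2) (mix Ht (-2) 0 0 1 2 0 0 0 0)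
      (mix_differentiable Ht hs 1 (-1) 1 0 0 1 1 2 2)
      ((mix_contDiff Ht hs 1 (-1) 1 0 0 1 1 2 2).continuous_fderiv (by simp))
      (mix_differentiable Ht hs (-2) 0 0 1 2 0 0 0 0)
      ((mix_contDiff Ht hs (-2) 0 0 1 2 0 0 0 0).continuous_fderiv (by simp))
      (3 * (|(1:ℝ)| + |(-1:ℝ)| + |(1:ℝ)|) * C2 ^ 2)
      (mix_bound Ht hs 1 (-1) 1 0 0 1 1 2 2 C2 hC2)
      (3 * (|(-2:ℝ)| + |(0:ℝ)| + |(0:ℝ)|) * C2 ^ 2) hB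
      1 2 (Or.inl rfl) (Or.inr rfl)
    intro x hx
    exact ident1 Ht hs x (hcurl x hx) (hdiv x hx)
  · apply conserved Ht hs hdecay 2 (mix Ht 1 1 (-1) 0 0 1 1 2 2) (mix Ht (-2) 0 0 1 2 0 0 0 0)
      (mix_differentiable Ht hs 1 1 (-1) 0 0 1 1 2 2)
      ((mix_contDiff Ht hs 1 1 (-1) 0 0 1 1 2 2).continuous_fderiv (by simp))
      (mix_differentiable Ht hs (-2) 0 0 1 2 0 0 0 0)
      ((mix_contDiff Ht hs (-2) 0 0 1 2 0 0 0 0).continuous_fderiv (by simp))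
      (3 * (|(1:ℝ)| + |(1:ℝ)| + |(-1:ℝ)|) * C2 ^ 2)
      (mix_bound Ht hs 1 1 (-1) 0 0 1 1 2 2 C2 hC2)
      (3 * (|(-2:ℝ)| + |(0:ℝ)| + |(0:ℝ)|) * C2 ^ 2) hB
      2 1 (Or.inr rfl) (Or.inl rfl)
    intro x hx
    exact ident2 Ht hs x (hcurl x hx) (hdiv x hx)
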